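/- arXiv:1111.6013 — 8 statements merged into one kernel-verified Lean document; each statement's English description precedes it below -/
import Mathlib

section
/- Let p > 1 and ε > 0. The function f(n) = n / (log₂(n+2) · (log₂ log₂(n+2))^{1+ε})^{1/p} satisfies property (C_p), i.e. the sum over n ≥ 1 of (1/n)·(f(n)/n)^p converges. -/
/-!
Put `u n = log₂ log₂ (n + 3)`. Since `log y - log x ≥ (y - x) / y`, applying this twice shows
that `u (n + 1) - u n` is at least a constant multiple of `1 / (n log₂ n)`, so the terms of the
series are dominated by `(u (n + 1) - u n) / u (n + 1) ^ (1 + ε)`. Convexity of `x ↦ x ^ (-ε)`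
bounds the latter by `(u n ^ (-ε) - u (n + 1) ^ (-ε)) / ε`, whose partial sums telescope and
stay below `u 0 ^ (-ε) / ε`.
-/

open Real Finset

lemma sub_div_rpow_le_rpow_neg_sub_div {ε a b : ℝ} (hε : 0 < ε) (ha : 0 < a) (hab : a ≤ b) :
    (b - a) / b ^ (1 + ε) ≤ (a ^ (-ε) - b ^ (-ε)) / ε := by
  have hb := ha.trans_le hab
  -- `(b / a) ^ ε = exp (ε log (b / a)) ≥ 1 + ε log (b / a) ≥ 1 + ε (1 - a / b)`
  have key : ε * (1 - (b / a)⁻¹) ≤ (b / a) ^ ε - 1 := by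
    have hlog := one_sub_inv_le_log_of_pos (div_pos hb ha)
    have hexp := add_one_le_exp (log (b / a) * ε)
    rw [rpow_def_of_pos (div_pos hb ha)]
    nlinarith
  have hA := rpow_pos_of_pos ha ε
  have hB := rpow_pos_of_pos hb ε
  rw [rpow_add hb, rpow_one, rpow_neg ha.le, rpow_neg hb.le, div_le_div_iff₀ (by positivity) hε]
  rw [inv_div, div_rpow hb.le ha.le] at key
  field_simp at key ⊢
  nlinarith

theorem summable_sub_div_rpow_of_monotone {u : ℕ → ℝ} (hu : Monotone u) (h0 : 0 < u 0)
    {ε : ℝ} (hε : 0 < ε) : Summable fun n => (u (n + 1) - u n) / u (n + 1) ^ (1 + ε) := by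
  have hpos n : 0 < u n := h0.trans_le (hu n.zero_le)
  refine summable_of_sum_range_le (c := u 0 ^ (-ε) / ε)
    (fun n => div_nonneg (sub_nonneg.2 (hu n.le_succ)) (rpow_nonneg (hpos _).le _)) fun n => ?_
  calc ∑ i ∈ range n, (u (i + 1) - u i) / u (i + 1) ^ (1 + ε)
      ≤ ∑ i ∈ range n, (u i ^ (-ε) - u (i + 1) ^ (-ε)) / ε :=
        sum_le_sum fun i _ => sub_div_rpow_le_rpow_neg_sub_div hε (hpos i) (hu i.le_succ)
    _ = (u 0 ^ (-ε) - u n ^ (-ε)) / ε := by rw [← sum_div, sum_range_sub']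
    _ ≤ u 0 ^ (-ε) / ε := by gcongr; exact sub_le_self _ (rpow_nonneg (hpos n).le _)

lemma sub_div_mul_log_le_logb_sub {b x y : ℝ} (hb : 1 < b) (hx : 0 < x) (hxy : x ≤ y) :
    (y - x) / (y * log b) ≤ logb b y - logb b x := by
  have hy := hx.trans_le hxy
  rw [← logb_div hy.ne' hx.ne', logb,
    show (y - x) / (y * log b) = (1 - (y / x)⁻¹) / log b by field_simp]
  exact div_le_div_of_nonneg_right (one_sub_inv_le_log_of_pos (div_pos hy hx)) (log_pos hb).le

lemma sub_div_le_logb_logb_sub {b x y : ℝ} (hb : 1 < b) (hx : 1 < x) (hxy : x ≤ y) :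
    (y - x) / (y * logb b y * log b ^ 2) ≤ logb b (logb b y) - logb b (logb b x) := by
  have hlogb := log_pos hb
  have hLx : 0 < logb b x := logb_pos hb hx
  have hLxy : logb b x ≤ logb b y := logb_le_logb_of_le hb (by linarith) hxy
  calc (y - x) / (y * logb b y * log b ^ 2)
      = (y - x) / (y * log b) / (logb b y * log b) := by field_simp
    _ ≤ (logb b y - logb b x) / (logb b y * log b) :=
        div_le_div_of_nonneg_right (sub_div_mul_log_le_logb_sub hb (by linarith) hxy)
          (by nlinarith)
    _ ≤ logb b (logb b y) - logb b (logb b x) := sub_div_mul_log_le_logb_sub hb hLx hLxy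

lemma one_lt_logb_two {x : ℝ} (hx : 2 < x) : 1 < logb 2 x := by
  rwa [lt_logb_iff_rpow_lt one_lt_two (by linarith), rpow_one]

lemma one_div_mul_logb_le_logb_logb_sub {x : ℝ} (hx : 0 ≤ x) :
    1 / ((x + 2) * logb 2 (x + 4)) ≤
      2 * log 2 ^ 2 * (logb 2 (logb 2 (x + 4)) - logb 2 (logb 2 (x + 3))) := by
  have hlog2 := log_pos one_lt_two
  have hL : 1 < logb 2 (x + 4) := one_lt_logb_two (by linarith)
  calc 1 / ((x + 2) * logb 2 (x + 4))
      ≤ 2 * log 2 ^ 2 * ((x + 4 - (x + 3)) / ((x + 4) * logb 2 (x + 4) * log 2 ^ 2)) := by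
        rw [div_le_iff₀ (by positivity)]
        field_simp
        nlinarith
    _ ≤ 2 * log 2 ^ 2 * (logb 2 (logb 2 (x + 4)) - logb 2 (logb 2 (x + 3))) :=
        mul_le_mul_of_nonneg_left
          (sub_div_le_logb_logb_sub one_lt_two (by linarith) (by linarith)) (by positivity)

theorem summable_one_div_mul_logb_mul_logb_logb_rpow {ε : ℝ} (hε : 0 < ε) :
    Summable fun n : ℕ =>
      1 / ((n + 1 : ℝ) * (logb 2 (n + 3) * logb 2 (logb 2 (n + 3)) ^ (1 + ε))) := by
  set u : ℕ → ℝ := fun n => logb 2 (logb 2 (n + 3))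
  have hL (n : ℕ) : 1 < logb 2 (n + 3) :=
    one_lt_logb_two (by linarith [(n.cast_nonneg : (0 : ℝ) ≤ n)])
  have hu_pos (n : ℕ) : 0 < u n := logb_pos one_lt_two (hL n)
  have hu : Monotone u := monotone_nat_of_le_succ fun n =>
    logb_le_logb_of_le one_lt_two (by linarith [hL n])
      (logb_le_logb_of_le one_lt_two (by positivity) (by push_cast; linarith))
  rw [← summable_nat_add_iff 1]
  refine ((summable_sub_div_rpow_of_monotone hu (hu_pos 0) hε).mul_left
    (2 * log 2 ^ 2)).of_nonneg_of_le (fun n => ?_) fun n => ?_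
  · have := hL (n + 1)
    have := rpow_pos_of_pos (hu_pos (n + 1)) (1 + ε)
    positivity
  · have hu_succ : u (n + 1) = logb 2 (logb 2 (n + 4)) := by simp only [u]; push_cast; ring_nf
    calc _ = 1 / ((n + 2) * logb 2 (n + 4)) / u (n + 1) ^ (1 + ε) := by
          simp only [u]; push_cast; rw [div_div]; ring_nf
      _ ≤ 2 * log 2 ^ 2 * (u (n + 1) - u n) / u (n + 1) ^ (1 + ε) := by
          refine div_le_div_of_nonneg_right ?_ (rpow_pos_of_pos (hu_pos (n + 1)) _).le
          rw [hu_succ]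
          exact one_div_mul_logb_le_logb_logb_sub n.cast_nonneg
      _ = _ := mul_div_assoc _ _ _

/-- For `p > 1`, `ε > 0`, the function
`f n = n / (log₂(n+2) · (log₂ log₂ (n+2))^(1+ε))^(1/p)` satisfies property (C_p):
`∑_{n ≥ 1} (1/n) (f n / n)^p < ∞`. -/
theorem stmt1 (p ε : ℝ) (hp : 1 < p) (hε : 0 < ε) (f : ℕ → ℝ)
    (hf : ∀ n : ℕ, f n = (n : ℝ) /
      ((Real.logb 2 ((n : ℝ) + 2) *
        (Real.logb 2 (Real.logb 2 ((n : ℝ) + 2))) ^ (1 + ε)) ^ (1 / p))) :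
    Summable (fun n : ℕ => (1 / ((n : ℝ) + 1)) * (f (n + 1) / ((n : ℝ) + 1)) ^ p) := by
  refine (summable_one_div_mul_logb_mul_logb_logb_rpow hε).congr fun n => ?_
  have hL : 1 < logb 2 (n + 3) := one_lt_logb_two (by linarith [(n.cast_nonneg : (0 : ℝ) ≤ n)])
  have hX : 0 ≤ logb 2 (n + 3) * logb 2 (logb 2 (n + 3)) ^ (1 + ε) :=
    mul_nonneg (by linarith) (rpow_nonneg (logb_pos one_lt_two hL).le _)
  rw [hf, Nat.cast_succ, add_assoc, show (1 : ℝ) + 2 = 3 by norm_num,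
    div_div_cancel_left' (by positivity), one_div p, inv_rpow (rpow_nonneg hX _),
    rpow_inv_rpow hX (by linarith), one_div, one_div, mul_inv]
end

section
/- Let p > 1 and let f : ℕ → ℝ≥0 be a concave non-decreasing function with property (C_p) and C := ∑_{n=1}^∞ (1/n)(f(n)/n)^p. Let m₁ < m₂ < ⋯ < m_{2k} be natural numbers with m₁ ≥ 1, and suppose additionally m_{2i} ≤ 2·m_{2i-1} for each i. Then ∑_{i=1}^k (f(m_{2i-1})/m_{2i-1})^p · (m_{2i} - m_{2i-1})/m_{2i-1} ≤ 2^{p+1}·C. -/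
/-!
Each block `[m (2i), m (2i+1))` lies in `[M, 2M]` for `M = m (2i)`, and by monotonicity of `f`
every term `(1/n) (f n / n)^p` of the series with `n` in that block is at least
`(1/2M) (f M / 2M)^p`. Summing over the block gives at least `2^{-(p+1)}` times the `i`-th summand
on the left, and the blocks are disjoint subsets of the positive integers.
-/

open Finset

noncomputable def cpTerm (f : ℕ → ℝ) (p : ℝ) (n : ℕ) : ℝ := 1 / (n : ℝ) * (f n / n) ^ p

section CpTerm

variable {f : ℕ → ℝ} {p : ℝ}

lemma cpTerm_nonneg (hf0 : ∀ n, 0 ≤ f n) (n : ℕ) : 0 ≤ cpTerm f p n :=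
  mul_nonneg (by positivity) (Real.rpow_nonneg (div_nonneg (hf0 n) n.cast_nonneg) p)

lemma cpTerm_succ (n : ℕ) :
    cpTerm f p (n + 1) = 1 / ((n : ℝ) + 1) * (f (n + 1) / ((n : ℝ) + 1)) ^ p := by
  simp only [cpTerm, Nat.cast_succ]

lemma le_cpTerm_of_le_of_le_two_mul (hf0 : ∀ n, 0 ≤ f n) (hmono : Monotone f) (hp : 0 ≤ p)
    {M n : ℕ} (hM : 0 < M) (hMn : M ≤ n) (hn : n ≤ 2 * M) :
    1 / (2 * (M : ℝ)) * (f M / (2 * M)) ^ p ≤ cpTerm f p n := by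
  have hn_pos : (0 : ℝ) < n := by exact_mod_cast hM.trans_le hMn
  have hn_le : (n : ℝ) ≤ 2 * M := by exact_mod_cast hn
  have hratio : f M / (2 * M) ≤ f n / n := div_le_div₀ (hf0 n) (hmono hMn) hn_pos hn_le
  exact mul_le_mul (one_div_le_one_div_of_le hn_pos hn_le)
    (Real.rpow_le_rpow (div_nonneg (hf0 M) (by positivity)) hratio hp)
    (Real.rpow_nonneg (div_nonneg (hf0 M) (by positivity)) p) (by positivity)

lemma rpow_div_mul_sub_div_le_sum_cpTerm (hf0 : ∀ n, 0 ≤ f n) (hmono : Monotone f)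
    (hp : 0 ≤ p) {M N : ℕ} (hM : 0 < M) (hMN : M ≤ N) (hN : N ≤ 2 * M) :
    (f M / M) ^ p * (((N : ℝ) - M) / M) ≤ 2 ^ (p + 1) * ∑ n ∈ Ico M N, cpTerm f p n := by
  have hM' : (0 : ℝ) < M := by exact_mod_cast hM
  have hcount : ((N : ℝ) - M) * (1 / (2 * (M : ℝ)) * (f M / (2 * M)) ^ p)
      ≤ ∑ n ∈ Ico M N, cpTerm f p n := by
    calc ((N : ℝ) - M) * (1 / (2 * (M : ℝ)) * (f M / (2 * M)) ^ p)
        = ∑ _n ∈ Ico M N, 1 / (2 * (M : ℝ)) * (f M / (2 * M)) ^ p := by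
          rw [sum_const, Nat.card_Ico, nsmul_eq_mul, Nat.cast_sub hMN]
      _ ≤ ∑ n ∈ Ico M N, cpTerm f p n := sum_le_sum fun n hn => by
          rw [mem_Ico] at hn
          exact le_cpTerm_of_le_of_le_two_mul hf0 hmono hp hM hn.1 (by omega)
  have hrewrite : (f M / M) ^ p * (((N : ℝ) - M) / M)
      = 2 ^ (p + 1) * (((N : ℝ) - M) * (1 / (2 * (M : ℝ)) * (f M / (2 * M)) ^ p)) := by
    rw [show f M / (2 * M) = (f M / M) / 2 by ring,
      Real.div_rpow (div_nonneg (hf0 M) hM'.le) zero_le_two, Real.rpow_add two_pos, Real.rpow_one]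
    field_simp
  rw [hrewrite]
  gcongr

end CpTerm

lemma sum_le_tsum_nat_succ {g : ℕ → ℝ} (hg : ∀ n, 0 ≤ g n) (hsum : Summable fun n => g (n + 1))
    {s : Finset ℕ} (hs : 0 ∉ s) : ∑ n ∈ s, g n ≤ ∑' n, g (n + 1) := by
  rw [← sum_preimage Nat.succ s Nat.succ_injective.injOn g fun n hn hrange => by
    obtain ⟨j, rfl⟩ := Nat.exists_eq_succ_of_ne_zero (ne_of_mem_of_not_mem hn hs)
    exact absurd ⟨j, rfl⟩ hrange]
  exact hsum.sum_le_tsum _ fun n _ => hg (n + 1)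

lemma pairwiseDisjoint_Ico_of_monotoneOn {m : ℕ → ℕ} {k : ℕ}
    (hm : MonotoneOn m (Set.Iio (2 * k))) :
    (range k : Set ℕ).PairwiseDisjoint fun i => Ico (m (2 * i)) (m (2 * i + 1)) := by
  have hsep : ∀ i j, j < k → i < j →
      Disjoint (Ico (m (2 * i)) (m (2 * i + 1))) (Ico (m (2 * j)) (m (2 * j + 1))) :=
    fun i j hj hij => (Ico_disjoint_Ico_consecutive _ _ _).mono_right <| Ico_subset_Ico_left <|
      hm (by simp only [Set.mem_Iio]; omega) (by simp only [Set.mem_Iio]; omega) (by omega)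
  intro i hi j hj hij
  simp only [coe_range, Set.mem_Iio] at hi hj
  rcases hij.lt_or_gt with h | h
  · exact hsep i j hj h
  · exact (hsep j i hi h).symm

theorem stmt4_general (p : ℝ) (hp : 1 < p) (f : ℕ → ℝ) (hf0 : ∀ n, 0 ≤ f n)
    (hmono : Monotone f)
    (hsum : Summable (fun n : ℕ => (1 / ((n : ℝ) + 1)) * (f (n + 1) / ((n : ℝ) + 1)) ^ p))
    (k : ℕ) (m : ℕ → ℕ) (hm1 : 1 ≤ m 0)
    (hmlt : ∀ i : ℕ, i + 1 < 2 * k → m i < m (i + 1))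
    (hdouble : ∀ i : ℕ, i < k → m (2 * i + 1) ≤ 2 * m (2 * i)) :
    ∑ i ∈ Finset.range k,
        (f (m (2 * i)) / (m (2 * i) : ℝ)) ^ p *
          (((m (2 * i + 1) : ℝ) - (m (2 * i) : ℝ)) / (m (2 * i) : ℝ))
      ≤ 2 ^ (p + 1) * ∑' n : ℕ, (1 / ((n : ℝ) + 1)) * (f (n + 1) / ((n : ℝ) + 1)) ^ p := by
  have hm_mono : MonotoneOn m (Set.Iio (2 * k)) :=
    (strictMonoOn_Iic_of_lt_succ (n := 2 * k - 1) fun i hi => hmlt i (by omega)).monotoneOn.mono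
      fun i hi => by simp only [Set.mem_Iio, Set.mem_Iic] at hi ⊢; omega
  have hpos : ∀ i < k, 0 < m (2 * i) := fun i hi =>
    hm1.trans (hm_mono (by simp only [Set.mem_Iio]; omega) (by simp only [Set.mem_Iio]; omega)
      (by omega))
  simp only [← cpTerm_succ] at hsum ⊢
  calc _ ≤ ∑ i ∈ range k, 2 ^ (p + 1) * ∑ n ∈ Ico (m (2 * i)) (m (2 * i + 1)), cpTerm f p n :=
        sum_le_sum fun i hi => by
          have hik := mem_range.1 hi
          exact rpow_div_mul_sub_div_le_sum_cpTerm hf0 hmono (by linarith) (hpos i hik)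
            (hmlt (2 * i) (by omega)).le (hdouble i hik)
    _ = 2 ^ (p + 1) * ∑ n ∈ (range k).biUnion fun i => Ico (m (2 * i)) (m (2 * i + 1)),
          cpTerm f p n := by
        rw [sum_biUnion (pairwiseDisjoint_Ico_of_monotoneOn hm_mono), ← mul_sum]
    _ ≤ 2 ^ (p + 1) * ∑' n, cpTerm f p (n + 1) := by
        gcongr
        refine sum_le_tsum_nat_succ (cpTerm_nonneg hf0) hsum fun h0 => ?_
        obtain ⟨i, hi, h0⟩ := mem_biUnion.1 h0
        exact (hpos i (mem_range.1 hi)).not_ge (mem_Ico.1 h0).1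

/-- Lemma 2.3 (second part): if moreover `m_{2i} ≤ 2 m_{2i-1}` then
`∑ᵢ (f(m_{2i-1})/m_{2i-1})^p (m_{2i}-m_{2i-1})/m_{2i-1} ≤ 2^{p+1} C`.
Here `m 0 < m 1 < ⋯ < m (2k-1)` encodes `m₁ < ⋯ < m_{2k}`. -/
theorem stmt4 (p : ℝ) (hp : 1 < p) (f : ℕ → ℝ) (hf0 : ∀ n, 0 ≤ f n)
    (hmono : Monotone f)
    (hconc : ∀ m n : ℕ, m ≤ n → f (n + m) - f n ≤ f n - f (n - m))
    (hsum : Summable (fun n : ℕ => (1 / ((n : ℝ) + 1)) * (f (n + 1) / ((n : ℝ) + 1)) ^ p))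
    (k : ℕ) (m : ℕ → ℕ) (hm1 : 1 ≤ m 0)
    (hmlt : ∀ i : ℕ, i + 1 < 2 * k → m i < m (i + 1))
    (hdouble : ∀ i : ℕ, i < k → m (2 * i + 1) ≤ 2 * m (2 * i)) :
    ∑ i ∈ Finset.range k,
        (f (m (2 * i)) / (m (2 * i) : ℝ)) ^ p *
          (((m (2 * i + 1) : ℝ) - (m (2 * i) : ℝ)) / (m (2 * i) : ℝ))
      ≤ 2 ^ (p + 1) * ∑' n : ℕ, (1 / ((n : ℝ) + 1)) * (f (n + 1) / ((n : ℝ) + 1)) ^ p :=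
  stmt4_general p hp f hf0 hmono hsum k m hm1 hmlt hdouble
end

section
/- Let f : ℕ → ℝ≥0 be a concave non-decreasing function. Then for every n ≥ 0 and every p ≥ 1, f(2^n)^p ≤ 2^{p+1} · ∑_{i=2^n+1}^{2^{n+1}} f(i)^p / i. -/
open Finset

theorem Monotone.card_Ioc_mul_div_le_sum_div {g : ℕ → ℝ} (hg : Monotone g) {a : ℕ}
    (hga : 0 ≤ g a) (b : ℕ) :
    ((b - a : ℕ) : ℝ) * (g a / b) ≤ ∑ i ∈ Ioc a b, g i / i := by
  rw [← Nat.card_Ioc, ← nsmul_eq_mul]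
  refine card_nsmul_le_sum _ _ _ fun i hi => ?_
  obtain ⟨hai, hib⟩ := mem_Ioc.mp hi
  have hi0 : (0 : ℝ) < i := by exact_mod_cast (Nat.zero_le a).trans_lt hai
  exact div_le_div₀ (hga.trans (hg hai.le)) (hg hai.le) hi0 (by exact_mod_cast hib)

theorem stmt6_general (p : ℝ) (hp : 1 ≤ p) (f : ℕ → ℝ) (hf0 : ∀ n, 0 ≤ f n)
    (hmono : Monotone f) :
    ∀ n : ℕ, f (2 ^ n) ^ p ≤
      2 ^ (p + 1) * ∑ i ∈ Finset.Ioc (2 ^ n) (2 ^ (n + 1)), f i ^ p / (i : ℝ) := by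
  intro n
  have hp0 : 0 ≤ p := zero_le_one.trans hp
  have hmono_rpow : Monotone fun i => f i ^ p :=
    fun i j hij => Real.rpow_le_rpow (hf0 i) (hmono hij) hp0
  have hblock := hmono_rpow.card_Ioc_mul_div_le_sum_div
    (Real.rpow_nonneg (hf0 (2 ^ n)) p) (2 ^ (n + 1))
  have hhalf : ((2 ^ (n + 1) - 2 ^ n : ℕ) : ℝ) * (f (2 ^ n) ^ p / ((2 ^ (n + 1) : ℕ) : ℝ)) =
      f (2 ^ n) ^ p / 2 := by
    rw [show 2 ^ (n + 1) - 2 ^ n = 2 ^ n by rw [pow_succ]; omega]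
    push_cast
    field_simp
    ring
  calc f (2 ^ n) ^ p ≤ 2 ^ p * f (2 ^ n) ^ p :=
        le_mul_of_one_le_left (Real.rpow_nonneg (hf0 _) p) (Real.one_le_rpow one_le_two hp0)
    _ = 2 ^ (p + 1) * (f (2 ^ n) ^ p / 2) := by
        rw [Real.rpow_add two_pos, Real.rpow_one]; ring
    _ ≤ _ := mul_le_mul_of_nonneg_left (hhalf ▸ hblock) (by positivity)

/-- For a concave non-decreasing `f : ℕ → ℝ≥0` and `p ≥ 1`:
`f(2^n)^p ≤ 2^{p+1} ∑_{i=2^n+1}^{2^{n+1}} f(i)^p / i`. -/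
theorem stmt6 (p : ℝ) (hp : 1 ≤ p) (f : ℕ → ℝ) (hf0 : ∀ n, 0 ≤ f n)
    (hmono : Monotone f)
    (hconc : ∀ m n : ℕ, m ≤ n → f (n + m) - f n ≤ f n - f (n - m)) :
    ∀ n : ℕ, f (2 ^ n) ^ p ≤
      2 ^ (p + 1) * ∑ i ∈ Finset.Ioc (2 ^ n) (2 ^ (n + 1)), f i ^ p / (i : ℝ) :=
  stmt6_general p hp f hf0 hmono
end

section
/- Let X be a geodesic δ-hyperbolic metric space (Rips condition: in every geodesic triangle each side lies in the union of the δ-neighbourhoods of the other two) with basepoint e. Let n ≥ 3δ and let x, y ∈ X satisfy d(x,e) ≥ n and d(x,y) ≤ n/4. Then for every geodesic g₀ from x to e, every geodesic g from y to e (parametrized by arclength from y), and every point p = g(t) with t ∈ [n, 2n], we have d(p, g₀([n/2, 5n/2])) ≤ 3δ. -/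
/-- A geodesic from `a` to `b`, parametrized by arclength on `[0, dist a b]`. -/
def IsGeodesicFrom {X : Type*} [MetricSpace X] (γ : ℝ → X) (a b : X) : Prop :=
  γ 0 = a ∧ γ (dist a b) = b ∧
    ∀ s ∈ Set.Icc (0 : ℝ) (dist a b), ∀ t ∈ Set.Icc (0 : ℝ) (dist a b),
      dist (γ s) (γ t) = |s - t|

/-- The Rips thin-triangles condition with constant `δ`: in every geodesic triangle each
side lies in the union of the `δ`-neighbourhoods of the other two. -/
def RipsHyperbolic (X : Type*) [MetricSpace X] (δ : ℝ) : Prop :=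
  ∀ (a b c : X) (γ₁ γ₂ γ₃ : ℝ → X),
    IsGeodesicFrom γ₁ a b → IsGeodesicFrom γ₂ b c → IsGeodesicFrom γ₃ a c →
      ∀ s ∈ Set.Icc (0 : ℝ) (dist a b),
        ∃ u ∈ γ₂ '' Set.Icc (0 : ℝ) (dist b c) ∪ γ₃ '' Set.Icc (0 : ℝ) (dist a c),
          dist (γ₁ s) u ≤ δ

/-!
Apply the Rips condition to the triangle `y, e, x` with sides `g`, `g₀` reversed, and some
geodesic from `y` to `x`. If `g t` is `δ`-close to `g₀`, the parameter there is within `δ` of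
`dist x (g t) ∈ [3n/4, 9n/4]`, so clamping it into `[n/2, 5n/2]` costs another `δ`. If instead
`g t` is `δ`-close to the short side, then `t ≤ n/4 + δ`, which together with `n ≤ t` and
`3δ ≤ n` forces the degenerate case `n = t = 0`.
-/

namespace IsGeodesicFrom

variable {X : Type*} [MetricSpace X] {γ : ℝ → X} {a b : X}

theorem dist_source_apply (hγ : IsGeodesicFrom γ a b) {s : ℝ} (hs : s ∈ Set.Icc 0 (dist a b)) :
    dist a (γ s) = s := by
  rw [← hγ.1, hγ.2.2 0 ⟨le_rfl, dist_nonneg⟩ s hs, zero_sub, abs_neg, abs_of_nonneg hs.1]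

theorem reverse (hγ : IsGeodesicFrom γ a b) :
    IsGeodesicFrom (fun s => γ (dist a b - s)) b a := by
  refine ⟨by simpa using hγ.2.1, by simpa [dist_comm b a] using hγ.1, ?_⟩
  intro s hs u hu
  rw [dist_comm b a] at hs hu
  rw [hγ.2.2 _ ⟨by linarith [hs.2], by linarith [hs.1]⟩ _ ⟨by linarith [hu.2], by linarith [hu.1]⟩,
    abs_sub_comm]
  ring_nf

/-- Clamping `r` into `[lo, hi]` moves it by at most `δ`, since `r` is `δ`-close to
`dist a p ∈ [lo, hi]`. -/
theorem exists_mem_Icc_dist_le (hγ : IsGeodesicFrom γ a b) {p : X} {r δ lo hi : ℝ}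
    (hr : r ∈ Set.Icc 0 (dist a b)) (hp : dist p (γ r) ≤ δ) (hlo₀ : 0 ≤ lo) (hloD : lo ≤ dist a b)
    (hlo : lo ≤ dist a p) (hhi : dist a p ≤ hi) :
    ∃ s ∈ Set.Icc lo hi ∩ Set.Icc 0 (dist a b), dist p (γ s) ≤ 2 * δ := by
  have har : dist a (γ r) = r := hγ.dist_source_apply hr
  have hr_lo : dist a p - δ ≤ r := by
    linarith [dist_triangle a (γ r) p, dist_comm p (γ r)]
  have hr_hi : r ≤ dist a p + δ := by linarith [dist_triangle a p (γ r)]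
  set s := max lo (min r hi)
  have hs : s ∈ Set.Icc lo hi ∩ Set.Icc 0 (dist a b) :=
    ⟨⟨le_max_left _ _, max_le (by linarith) (min_le_right _ _)⟩,
      by linarith [le_max_left lo (min r hi)], max_le hloD ((min_le_left _ _).trans hr.2)⟩
  have hδ : 0 ≤ δ := dist_nonneg.trans hp
  have hrs : |r - s| ≤ δ := by
    have hs_hi : s ≤ r + δ :=
      max_le (by linarith) ((min_le_left r hi).trans (by linarith))
    have hs_lo : r - δ ≤ s :=
      (le_min (by linarith) (by linarith) : r - δ ≤ min r hi).trans (le_max_right _ _)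
    rw [abs_le]
    constructor <;> linarith
  refine ⟨s, hs, ?_⟩
  calc dist p (γ s) ≤ dist p (γ r) + dist (γ r) (γ s) := dist_triangle _ _ _
    _ ≤ δ + δ := add_le_add hp (by rwa [hγ.2.2 r hr s hs.2])
    _ = 2 * δ := by ring

end IsGeodesicFrom

theorem stmt7_general {X : Type*} [MetricSpace X] (δ : ℝ)
    (hgeo : ∀ a b : X, ∃ γ : ℝ → X, IsGeodesicFrom γ a b)
    (hrips : RipsHyperbolic X δ)
    (e x y : X) (n : ℝ) (hn : 3 * δ ≤ n)
    (hx : n ≤ dist x e) (hxy : dist x y ≤ n / 4)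
    (g₀ g : ℝ → X) (hg₀ : IsGeodesicFrom g₀ x e) (hg : IsGeodesicFrom g y e)
    (t : ℝ) (ht : t ∈ Set.Icc n (2 * n)) (ht' : t ∈ Set.Icc 0 (dist y e)) :
    ∃ s ∈ Set.Icc (n / 2) (5 * n / 2) ∩ Set.Icc 0 (dist x e),
      dist (g t) (g₀ s) ≤ 3 * δ := by
  obtain ⟨γ, hγ⟩ := hgeo y x
  obtain ⟨u, hu, hgu⟩ := hrips y e x g _ γ hg hg₀.reverse hγ t ht'
  have hδ : 0 ≤ δ := dist_nonneg.trans hgu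
  have hyg : dist y (g t) = t := hg.dist_source_apply ht'
  have hn₀ : 0 ≤ n := by linarith [ht.1, ht.2]
  rcases hu with ⟨r, hr, rfl⟩ | ⟨r, hr, rfl⟩
  · rw [dist_comm e x] at hr
    have hxg_lo : 3 * n / 4 ≤ dist x (g t) := by
      linarith [dist_triangle y x (g t), dist_comm x y, ht.1]
    have hxg_hi : dist x (g t) ≤ 9 * n / 4 := by
      linarith [dist_triangle x y (g t), ht.2]
    obtain ⟨s, hs, hgs⟩ := hg₀.exists_mem_Icc_dist_le (p := g t) (lo := n / 2) (hi := 5 * n / 2)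
      ⟨by linarith [hr.2], by linarith [hr.1]⟩ hgu (by linarith) (by linarith)
      (by linarith) (by linarith)
    exact ⟨s, hs, by linarith⟩
  · have hyu : dist y (γ r) ≤ n / 4 := by
      rw [hγ.dist_source_apply hr]; linarith [hr.2, dist_comm x y]
    have ht_le : t ≤ n / 4 + δ := by
      linarith [dist_triangle y (γ r) (g t), dist_comm (γ r) (g t)]
    have hn_eq : n = 0 := by linarith [ht.1]
    have ht0 : t = 0 := by linarith [ht.1]
    refine ⟨0, ⟨⟨by linarith, by linarith⟩, le_rfl, dist_nonneg⟩, ?_⟩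
    rw [ht0, hg.1, hg₀.1, dist_comm]
    linarith

/-- Lemma 3.1: geodesic stability in a δ-hyperbolic space. Any point `g(t)`, `t ∈ [n,2n]`,
on a geodesic `g` from `y` to `e` is within `3δ` of `g₀([n/2, 5n/2])` for any geodesic `g₀`
from `x` to `e`, provided `n ≥ 3δ`, `d(x,e) ≥ n` and `d(x,y) ≤ n/4`. -/
theorem stmt7 {X : Type*} [MetricSpace X] (δ : ℝ) (hδ : 0 ≤ δ)
    (hgeo : ∀ a b : X, ∃ γ : ℝ → X, IsGeodesicFrom γ a b)
    (hrips : RipsHyperbolic X δ)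
    (e x y : X) (n : ℝ) (hn : 3 * δ ≤ n)
    (hx : n ≤ dist x e) (hxy : dist x y ≤ n / 4)
    (g₀ g : ℝ → X) (hg₀ : IsGeodesicFrom g₀ x e) (hg : IsGeodesicFrom g y e)
    (t : ℝ) (ht : t ∈ Set.Icc n (2 * n)) (ht' : t ∈ Set.Icc 0 (dist y e)) :
    ∃ s ∈ Set.Icc (n / 2) (5 * n / 2) ∩ Set.Icc 0 (dist x e),
      dist (g t) (g₀ s) ≤ 3 * δ :=
  stmt7_general δ hgeo hrips e x y n hn hx hxy g₀ g hg₀ hg t ht ht'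
end

section
/- Let Γ be a connected simplicial graph, tree-graded with respect to pieces {Γ_i}_{i∈I}, with a basepoint e. For each vertex x there exist a finite set I_x = {i₀,…,i_k} ⊆ I and vertices x₀,…,x_k = x such that every geodesic g from e to x decomposes as a concatenation g = g₀ \bar{g}₀ g₁ ⋯ \bar{g}_{k-1} g_k where each g_j is a geodesic contained in the piece Γ_{i_j} from the unique vertex e_j of Γ_{i_j} closest to e₀ = e to x_j, and each connecting segment \bar{g}_j has length at most 1. Moreover the sets I_x and {x_j} do not depend on the choice of geodesic g. -/
/-- A connected simplicial graph `G` is tree-graded with respect to a collection of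
non-empty connected subgraphs (given by their vertex sets `P i`) if every vertex and every
simple loop lies in some piece, no piece contains another, and two distinct pieces share
at most one vertex. -/
def IsTreeGraded {V ι : Type*} (G : SimpleGraph V) (P : ι → Set V) : Prop :=
  (∀ i, (P i).Nonempty) ∧
  (∀ i, (G.induce (P i)).Connected) ∧
  (∀ v : V, ∃ i, v ∈ P i) ∧
  (∀ (v : V) (c : G.Walk v v), c.IsCycle → ∃ i, ∀ u ∈ c.support, u ∈ P i) ∧
  (∀ i j, i ≠ j → ¬ P i ⊆ P j) ∧
  (∀ i j, i ≠ j → (P i ∩ P j).Subsingleton)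

/-!
Pieces are convex: if a path between two vertices of a piece left the piece, it would close up
with a path inside the piece to a simple loop, and the piece containing that loop would share
two vertices with the first one. Hence every geodesic from `e` to a vertex of a piece passes
through the closest point of the piece and stays inside the piece afterwards. Likewise, if `y`
is the closest point of every piece containing it, two geodesics reaching `y` through different
neighbours would close up a loop through `y` and a vertex nearer to `e`, so all geodesics reach
`y` through the same neighbour.

The decomposition of the geodesics to `x ∈ P i` is built by induction on the distance from `e`
to the closest point `y` of `P i`: either `y = e`; or `y` lies in a piece whose closest point
is nearer to `e`, and we continue from `y` in that piece; or we continue from the common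
predecessor of `y`. The closest points of the successive pieces get strictly nearer to `e`,
which makes the pieces distinct.
-/

open SimpleGraph Walk

namespace SimpleGraph.Walk

variable {V : Type*} {G : SimpleGraph V} {u v t x : V}

lemma IsPath.start_notMem_support_tail {p : G.Walk u x} (hp : p.IsPath) : u ∉ p.support.tail := by
  have hnodup := hp.support_nodup
  rw [← cons_tail_support] at hnodup
  exact hnodup.notMem

variable {w : G.Walk u x}

lemma length_takeUntil_eq_dist [DecidableEq V] (hw : w.length = G.dist u x) (hv : v ∈ w.support) :
    (w.takeUntil v hv).length = G.dist u v :=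
  length_eq_dist_of_subwalk hw (w.isSubwalk_takeUntil hv)

lemma length_dropUntil_eq_dist [DecidableEq V] (hw : w.length = G.dist u x) (hv : v ∈ w.support) :
    (w.dropUntil v hv).length = G.dist v x :=
  length_eq_dist_of_subwalk hw (w.isSubwalk_dropUntil hv)

lemma dist_add_dist_of_mem_support (hw : w.length = G.dist u x) (hv : v ∈ w.support) :
    G.dist u v + G.dist v x = G.dist u x := by
  classical
  rw [← length_takeUntil_eq_dist hw hv, ← length_dropUntil_eq_dist hw hv, ← length_append,
    take_spec, hw]

lemma mem_support_takeUntil_of_dist_le [DecidableEq V] (hw : w.length = G.dist u x)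
    (ht : t ∈ w.support) (hv : v ∈ w.support) (h : G.dist u v ≤ G.dist u t) :
    v ∈ (w.takeUntil t ht).support := by
  rw [← take_spec w ht, mem_support_append_iff] at hv
  rcases hv with hv | hv
  · exact hv
  have := dist_add_dist_of_mem_support (length_dropUntil_eq_dist hw ht) hv
  have := dist_add_dist_of_mem_support hw ht
  have := dist_add_dist_of_mem_support hw (w.support_dropUntil_subset_support ht hv)
  obtain rfl : t = v := ((w.dropUntil t ht).takeUntil v hv).reachable.dist_eq_zero_iff.1 (by omega)
  exact end_mem_support _

lemma mem_support_dropUntil_of_dist_le [DecidableEq V] (hw : w.length = G.dist u x)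
    (ht : t ∈ w.support) (hv : v ∈ w.support) (h : G.dist u t ≤ G.dist u v) :
    v ∈ (w.dropUntil t ht).support := by
  rw [← take_spec w ht, mem_support_append_iff] at hv
  rcases hv with hv | hv
  · have := dist_add_dist_of_mem_support (length_takeUntil_eq_dist hw ht) hv
    obtain rfl : v = t :=
      ((w.takeUntil t ht).dropUntil v hv).reachable.dist_eq_zero_iff.1 (by omega)
    exact start_mem_support _
  · exact hv

lemma dist_penultimate_add_one (hw : w.length = G.dist u x) (hux : u ≠ x) :
    G.dist u w.penultimate + 1 = G.dist u x := by
  have hadj := adj_penultimate fun h : w.Nil => hux h.eq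
  rw [← dist_add_dist_of_mem_support hw (w.getVert_mem_support _), dist_eq_one_iff_adj.2 hadj]

end SimpleGraph.Walk

namespace SimpleGraph

variable {V : Type*} {G : SimpleGraph V} {u v : V}

lemma exists_isPath_of_connected_induce {s : Set V} (h : (G.induce s).Connected) (hu : u ∈ s)
    (hv : v ∈ s) : ∃ p : G.Walk u v, p.IsPath ∧ ∀ c ∈ p.support, c ∈ s := by
  obtain ⟨p, hp, -⟩ := (h ⟨u, hu⟩ ⟨v, hv⟩).exists_path_of_dist
  refine ⟨p.map (Embedding.induce (G := G) s).toHom,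
    hp.map (Embedding.induce (G := G) s).injective, fun c hc => ?_⟩
  obtain ⟨⟨c, hcs⟩, -, rfl⟩ := List.mem_map.1 (Walk.support_map _ p ▸ hc)
  exact hcs

end SimpleGraph

namespace IsTreeGraded

variable {V ι : Type*} {G : SimpleGraph V} {P : ι → Set V} {i : ι} {a b u v : V}

lemma eq_of_mem_of_mem (htg : IsTreeGraded G P) {j : ι} (hab : a ≠ b) (hai : a ∈ P i)
    (hbi : b ∈ P i) (haj : a ∈ P j) (hbj : b ∈ P j) : i = j := by
  obtain ⟨-, -, -, -, -, hinter⟩ := htg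
  by_contra hij
  exact hab (hinter i j hij ⟨hai, haj⟩ ⟨hbi, hbj⟩)

lemma mem_of_isPath (htg : IsTreeGraded G P) {p : G.Walk u v} (hp : p.IsPath) (hu : u ∈ P i)
    (hv : v ∈ P i) : ∀ c ∈ p.support, c ∈ P i := by
  classical
  induction hn : p.length using Nat.strong_induction_on generalizing u v with
  | _ n ih =>
  intro c hc
  rcases le_or_gt p.length 1 with hle | hlt
  · obtain ⟨m, rfl, hm⟩ := mem_support_iff_exists_getVert.1 hc
    rcases Nat.eq_zero_or_pos m with rfl | hm0
    · rwa [getVert_zero]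
    · rwa [show m = p.length by omega, getVert_length]
  by_cases hmid : ∃ m ∈ p.support, m ≠ u ∧ m ≠ v ∧ m ∈ P i
  · obtain ⟨m, hm, hmu, hmv, hmi⟩ := hmid
    rw [← take_spec p hm, mem_support_append_iff] at hc
    rcases hc with hc | hc
    · exact ih _ (hn ▸ length_takeUntil_lt_length hm hmv) (hp.takeUntil hm) hu hmi rfl c hc
    · exact ih _ (hn ▸ length_dropUntil_lt_length hm hmu) (hp.dropUntil hm) hmi hv rfl c hc
  push Not at hmid
  have ⟨_, hpiece, _, hcyc, _, _⟩ := htg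
  obtain ⟨q, hq, hqi⟩ := exists_isPath_of_connected_induce (hpiece i) hv hu
  have hcycle : (p.append q).IsCycle := by
    refine hp.isCycle_append hq (fun y hyp hyq => ?_) (Or.inl hlt)
    have hyu : y ≠ u := by rintro rfl; exact hp.start_notMem_support_tail hyp
    have hyv : y ≠ v := by rintro rfl; exact hq.start_notMem_support_tail hyq
    exact hmid y (List.mem_of_mem_tail hyp) hyu hyv (hqi y (List.mem_of_mem_tail hyq))
  obtain ⟨j, hj⟩ := hcyc u _ hcycle
  have huv : u ≠ v := by
    rintro rfl
    rw [length_eq_zero_iff.2 (isPath_iff_nil.1 hp)] at hlt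
    omega
  have hmem : ∀ y ∈ p.support, y ∈ P j :=
    fun y hy => hj y (p.support_subset_support_append_left q hy)
  rw [htg.eq_of_mem_of_mem huv hu hv (hmem u p.start_mem_support) (hmem v p.end_mem_support)]
  exact hmem c hc

lemma exists_mem_edges (htg : IsTreeGraded G P) (ha : a ∈ P i) (hb : b ∈ P i) (hab : a ≠ b)
    (W : G.Walk a b) : ∃ u ∈ P i, u ≠ a ∧ s(a, u) ∈ W.edges := by
  classical
  have hnil : ¬ W.bypass.Nil := fun h => hab h.eq
  have hedge := W.bypass.mk_start_snd_mem_edges hnil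
  exact ⟨W.bypass.snd,
    htg.mem_of_isPath W.bypass_isPath ha hb _ (W.bypass.snd_mem_support_of_mem_edges hedge),
    (W.bypass.adj_snd hnil).ne', W.edges_bypass_subset_edges hedge⟩

lemma exists_mem_mem_of_adj (htg : IsTreeGraded G P) {y z z' : V} (hz : G.Adj y z)
    (hz' : G.Adj y z') (hne : z ≠ z') (W : G.Walk z z') (hy : y ∉ W.support) :
    ∃ m, y ∈ P m ∧ z ∈ P m := by
  classical
  obtain ⟨_, _, _, hcyc, _, _⟩ := htg
  have hy' : y ∉ W.bypass.support := fun h => hy (W.support_bypass_subset_support h)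
  have hcycle : (cons hz (W.bypass.concat hz'.symm)).IsCycle := by
    refine (cons_isCycle_iff _ _).2 ⟨W.bypass_isPath.concat hy' hz'.symm, fun h => ?_⟩
    rw [edges_concat, List.concat_eq_append, List.mem_append, List.mem_singleton] at h
    rcases h with h | h
    · exact hy' (W.bypass.fst_mem_support_of_mem_edges h)
    · rcases Sym2.eq_iff.1 h with ⟨rfl, -⟩ | ⟨-, rfl⟩
      · exact hz'.ne rfl
      · exact hne rfl
  obtain ⟨m, hm⟩ := hcyc y _ hcycle
  exact ⟨m, hm y (start_mem_support _), hm z (by simp)⟩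

end IsTreeGraded

section TreeGraded

structure IsClosestPointMap {V ι : Type*} (G : SimpleGraph V) (P : ι → Set V) (e : V)
    (entry : ι → V) : Prop where
  mem : ∀ i, entry i ∈ P i
  dist_le : ∀ i, ∀ v ∈ P i, G.dist e (entry i) ≤ G.dist e v
  eq_of_dist_eq : ∀ i, ∀ v ∈ P i, G.dist e v = G.dist e (entry i) → v = entry i

variable {V ι : Type*} {G : SimpleGraph V} {P : ι → Set V} {e : V} {entry : ι → V} {i : ι}
  {t v x y : V}

lemma IsClosestPointMap.dist_lt (hent : IsClosestPointMap G P e entry) (hv : v ∈ P i)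
    (hne : v ≠ entry i) : G.dist e (entry i) < G.dist e v :=
  (hent.dist_le i v hv).lt_of_ne fun h => hne (hent.eq_of_dist_eq i v hv h.symm)

namespace IsTreeGraded

lemma entry_mem_support (htg : IsTreeGraded G P) (hconn : G.Connected)
    (hent : IsClosestPointMap G P e entry) (hx : x ∈ P i) {w : G.Walk e x}
    (hw : w.length = G.dist e x) : entry i ∈ w.support := by
  classical
  obtain ⟨a, ⟨haw, hai⟩, hmin⟩ :=
    Set.exists_min_image {v | v ∈ w.support ∧ v ∈ P i} (G.dist e)
      (w.support.finite_toSet.subset fun v hv => hv.1) ⟨x, w.end_mem_support, hx⟩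
  suffices a = entry i from this ▸ haw
  by_contra hne
  set q := w.takeUntil a haw
  have hq : ∀ c ∈ q.support, c ∈ P i → c = a := by
    intro c hc hci
    have := dist_add_dist_of_mem_support (length_takeUntil_eq_dist hw haw) hc
    have := hmin c ⟨w.support_takeUntil_subset_support haw hc, hci⟩
    exact (q.dropUntil c hc).reachable.dist_eq_zero_iff.1 (by omega)
  obtain ⟨q', hq'len⟩ := hconn.exists_walk_length_eq_dist e (entry i)
  have hq' : ∀ c ∈ q'.support, c ∈ P i → c = entry i := by
    intro c hc hci
    by_contra hce
    have := hent.dist_lt hci hce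
    have := dist_add_dist_of_mem_support hq'len hc
    omega
  -- The walk `a → e → entry i` meets `P i` only at its ends, yet by convexity of `P i`
  -- its first edge lies in `P i`.
  obtain ⟨u, hui, hua, hedge⟩ :=
    htg.exists_mem_edges hai (hent.mem i) hne (q.reverse.append q')
  rw [edges_append, List.mem_append, edges_reverse, List.mem_reverse] at hedge
  rcases hedge with h | h
  · exact hua (hq u (q.snd_mem_support_of_mem_edges h) hui)
  · exact hne (hq' a (q'.fst_mem_support_of_mem_edges h) hai)

lemma mem_of_dist_entry_le (htg : IsTreeGraded G P) (hconn : G.Connected)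
    (hent : IsClosestPointMap G P e entry) (hx : x ∈ P i) {w : G.Walk e x}
    (hw : w.length = G.dist e x) (hv : v ∈ w.support) (h : G.dist e (entry i) ≤ G.dist e v) :
    v ∈ P i := by
  classical
  have he := htg.entry_mem_support hconn hent hx hw
  exact htg.mem_of_isPath ((w.dropUntil _ he).isPath_of_length_eq_dist
    (length_dropUntil_eq_dist hw he)) (hent.mem i) hx v
    (mem_support_dropUntil_of_dist_le hw he hv h)

lemma dist_entry_add_dist (htg : IsTreeGraded G P) (hconn : G.Connected)
    (hent : IsClosestPointMap G P e entry) (hx : x ∈ P i) :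
    G.dist e (entry i) + G.dist (entry i) x = G.dist e x := by
  classical
  obtain ⟨w, hw⟩ := hconn.exists_walk_length_eq_dist e x
  exact dist_add_dist_of_mem_support hw (htg.entry_mem_support hconn hent hx hw)

lemma mem_support_of_forall_mem_support_entry (htg : IsTreeGraded G P) (hconn : G.Connected)
    (hent : IsClosestPointMap G P e entry) (hx : x ∈ P i)
    (ht : ∀ w : G.Walk e (entry i), w.length = G.dist e (entry i) → t ∈ w.support)
    {w : G.Walk e x} (hw : w.length = G.dist e x) : t ∈ w.support := by
  classical
  have he := htg.entry_mem_support hconn hent hx hw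
  exact w.support_takeUntil_subset_support he (ht _ (length_takeUntil_eq_dist hw he))

lemma eq_of_adj_of_dist_add_one (htg : IsTreeGraded G P) (hconn : G.Connected)
    (hent : IsClosestPointMap G P e entry) (hy : ∀ p, y ∈ P p → entry p = y) {z z' : V}
    (hz : G.Adj z y) (hz' : G.Adj z' y) (hdz : G.dist e z + 1 = G.dist e y)
    (hdz' : G.dist e z' + 1 = G.dist e y) : z = z' := by
  by_contra hne
  have hy_notMem : ∀ {c} (A : G.Walk e c), A.length = G.dist e c →
      G.dist e c + 1 = G.dist e y → y ∉ A.support := fun A hA hd hyA => by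
    have := dist_add_dist_of_mem_support hA hyA
    omega
  obtain ⟨A, hA⟩ := hconn.exists_walk_length_eq_dist e z
  obtain ⟨A', hA'⟩ := hconn.exists_walk_length_eq_dist e z'
  have hyW : y ∉ (A.reverse.append A').support := by
    rw [mem_support_append_iff, support_reverse, List.mem_reverse]
    exact fun h => h.elim (hy_notMem A hA hdz) (hy_notMem A' hA' hdz')
  obtain ⟨m, hym, hzm⟩ := htg.exists_mem_mem_of_adj hz.symm hz'.symm hne _ hyW
  have := hent.dist_le m z hzm
  rw [hy m hym] at this
  omega

lemma exists_adj_forall_mem_support (htg : IsTreeGraded G P) (hconn : G.Connected)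
    (hent : IsClosestPointMap G P e entry) (hy : ∀ p, y ∈ P p → entry p = y) (hey : e ≠ y) :
    ∃ z, G.Adj z y ∧ G.dist e z < G.dist e y ∧
      ∀ w : G.Walk e y, w.length = G.dist e y → z ∈ w.support := by
  obtain ⟨w₀, hw₀⟩ := hconn.exists_walk_length_eq_dist e y
  have hadj (w : G.Walk e y) : G.Adj w.penultimate y := adj_penultimate fun h => hey h.eq
  have hd₀ := dist_penultimate_add_one hw₀ hey
  refine ⟨w₀.penultimate, hadj w₀, by omega, fun w hw => ?_⟩
  rw [htg.eq_of_adj_of_dist_add_one hconn hent hy (hadj w₀) (hadj w) hd₀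
    (dist_penultimate_add_one hw hey)]
  exact w.getVert_mem_support _

end IsTreeGraded

/-- In the notation of the paper, `idx j = i_j`, `pts j = x_j` and `entry (idx j) = e_j`; the
segment `g_j` of a geodesic consists of its vertices `v` with
`d(e, e_j) ≤ d(e, v) ≤ d(e, x_j)`. -/
structure GeodesicDecomposition (G : SimpleGraph V) (P : ι → Set V) (e : V) (entry : ι → V)
    (i : ι) (x : V) where
  k : ℕ
  idx : Fin (k + 1) → ι
  pts : Fin (k + 1) → V
  entry_idx_zero : entry (idx 0) = e
  idx_last : idx (Fin.last k) = i
  pts_last : pts (Fin.last k) = x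
  pts_mem : ∀ j, pts j ∈ P (idx j)
  mem_support : ∀ w : G.Walk e x, w.length = G.dist e x →
    ∀ j, entry (idx j) ∈ w.support ∧ pts j ∈ w.support
  mem_of_dist : ∀ w : G.Walk e x, w.length = G.dist e x → ∀ j, ∀ v ∈ w.support,
    G.dist e (entry (idx j)) ≤ G.dist e v → G.dist e v ≤ G.dist e (pts j) → v ∈ P (idx j)
  dist_le_one : ∀ j : Fin k, G.dist (pts j.castSucc) (entry (idx j.succ)) ≤ 1
  dist_eq_sum : G.dist e x = (∑ j, G.dist (entry (idx j)) (pts j)) +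
    ∑ j : Fin k, G.dist (pts j.castSucc) (entry (idx j.succ))
  strictMono : StrictMono fun j => G.dist e (entry (idx j))

namespace GeodesicDecomposition

lemma injective_idx (D : GeodesicDecomposition G P e entry i x) : Function.Injective D.idx :=
  Function.Injective.of_comp (f := fun i => G.dist e (entry i)) D.strictMono.injective

def single (htg : IsTreeGraded G P) (hent : IsClosestPointMap G P e entry) (hx : x ∈ P i)
    (he : entry i = e) : GeodesicDecomposition G P e entry i x where
  k := 0
  idx _ := i
  pts _ := x
  entry_idx_zero := he
  idx_last := rfl
  pts_last := rfl
  pts_mem _ := hx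
  mem_support w _ _ := ⟨he ▸ w.start_mem_support, w.end_mem_support⟩
  mem_of_dist w hw _ v hv _ _ :=
    htg.mem_of_isPath (w.isPath_of_length_eq_dist hw) (he ▸ hent.mem i) hx v hv
  dist_le_one j := j.elim0
  dist_eq_sum := by simp [he]
  strictMono := Fin.strictMono_iff_lt_succ.2 fun j => j.elim0

def snoc {q : ι} (D : GeodesicDecomposition G P e entry q t) (htg : IsTreeGraded G P)
    (hconn : G.Connected) (hent : IsClosestPointMap G P e entry) (hx : x ∈ P i)
    (ht : ∀ w : G.Walk e (entry i), w.length = G.dist e (entry i) → t ∈ w.support)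
    (hdist : G.dist t (entry i) ≤ 1) (hlt : G.dist e (entry q) < G.dist e (entry i)) :
    GeodesicDecomposition G P e entry i x where
  k := D.k + 1
  idx := Fin.snoc D.idx i
  pts := Fin.snoc D.pts x
  entry_idx_zero := by rw [← Fin.castSucc_zero, Fin.snoc_castSucc]; exact D.entry_idx_zero
  idx_last := Fin.snoc_last ..
  pts_last := Fin.snoc_last ..
  pts_mem := Fin.lastCases (by simpa using hx) fun j => by simpa using D.pts_mem j
  mem_support w hw := by
    classical
    have htw := htg.mem_support_of_forall_mem_support_entry hconn hent hx ht hw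
    refine Fin.lastCases ?_ fun j => ?_
    · simpa using htg.entry_mem_support hconn hent hx hw
    · simpa using (D.mem_support _ (length_takeUntil_eq_dist hw htw) j).imp
        (w.support_takeUntil_subset_support htw ·) (w.support_takeUntil_subset_support htw ·)
  mem_of_dist w hw := by
    classical
    have htw := htg.mem_support_of_forall_mem_support_entry hconn hent hx ht hw
    refine Fin.lastCases ?_ fun j => ?_
    · simpa using fun v hv hle _ => htg.mem_of_dist_entry_le hconn hent hx hw hv hle
    · simp only [Fin.snoc_castSucc]
      intro v hv hle hle'
      have hpre := length_takeUntil_eq_dist hw htw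
      have := dist_add_dist_of_mem_support hpre (D.mem_support _ hpre j).2
      exact D.mem_of_dist _ hpre j v (mem_support_takeUntil_of_dist_le hw htw hv (by omega))
        hle hle'
  dist_le_one := Fin.lastCases (by simpa [D.pts_last] using hdist)
    fun j => by simpa only [Fin.succ_castSucc, Fin.snoc_castSucc] using D.dist_le_one j
  dist_eq_sum := by
    classical
    have hx_eq := htg.dist_entry_add_dist hconn hent hx
    obtain ⟨w, hw⟩ := hconn.exists_walk_length_eq_dist e (entry i)
    have ht_eq := dist_add_dist_of_mem_support hw (ht w hw)
    have hD := D.dist_eq_sum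
    simp only [Fin.sum_univ_castSucc, Fin.snoc_castSucc, Fin.snoc_last, Fin.succ_last,
      Fin.succ_castSucc, D.pts_last] at hD ⊢
    omega
  strictMono := Fin.strictMono_iff_lt_succ.2 <| Fin.lastCases (by simpa [D.idx_last] using hlt)
    fun j => by simpa only [Fin.succ_castSucc, Fin.snoc_castSucc] using
      D.strictMono (Fin.castSucc_lt_succ (i := j))

end GeodesicDecomposition

theorem IsTreeGraded.nonempty_geodesicDecomposition (htg : IsTreeGraded G P)
    (hconn : G.Connected) (hent : IsClosestPointMap G P e entry) {i : ι} {x : V} (hx : x ∈ P i) :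
    Nonempty (GeodesicDecomposition G P e entry i x) := by
  by_cases he : entry i = e
  · exact ⟨.single htg hent hx he⟩
  by_cases hshared : ∃ q, entry i ∈ P q ∧ entry q ≠ entry i
  · obtain ⟨q, hq, hne⟩ := hshared
    have hlt := hent.dist_lt hq hne.symm
    obtain ⟨D⟩ := htg.nonempty_geodesicDecomposition hconn hent hq
    exact ⟨D.snoc htg hconn hent hx (fun w _ => w.end_mem_support) (by simp) hlt⟩
  · push Not at hshared
    obtain ⟨z, hz, hlt, hzw⟩ :=
      htg.exists_adj_forall_mem_support hconn hent hshared (Ne.symm he)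
    have ⟨_, _, hcover, _, _, _⟩ := htg
    obtain ⟨q, hq⟩ := hcover z
    have hlt' := (hent.dist_le q z hq).trans_lt hlt
    obtain ⟨D⟩ := htg.nonempty_geodesicDecomposition hconn hent hq
    exact ⟨D.snoc htg hconn hent hx hzw (dist_eq_one_iff_adj.2 hz).le hlt'⟩
termination_by G.dist e (entry i)

end TreeGraded

/-- Lemma 4.4: decomposition of geodesics in a tree-graded graph.  For every vertex `x`
there are finitely many pieces `idx 0, …, idx k` and vertices `pts 0, …, pts k = x`
(independent of the chosen geodesic) such that every geodesic `w` from `e` to `x`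
decomposes as a concatenation of geodesics `g_j ⊆ P (idx j)` from the entry point
`entry (idx j)` (the unique vertex of the piece closest to `e`) to `pts j`, joined by
connecting segments of length at most `1`. -/
theorem stmt10 {V ι : Type*} (G : SimpleGraph V) (hconn : G.Connected)
    (P : ι → Set V) (htg : IsTreeGraded G P) (e : V)
    (entry : ι → V)
    (hentry_mem : ∀ i, entry i ∈ P i)
    (hentry_min : ∀ i, ∀ v ∈ P i, G.dist e (entry i) ≤ G.dist e v)
    (hentry_uniq : ∀ i, ∀ v ∈ P i, G.dist e v = G.dist e (entry i) → v = entry i)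
    (x : V) :
    ∃ (k : ℕ) (idx : Fin (k + 1) → ι) (pts : Fin (k + 1) → V),
      Function.Injective idx ∧
      entry (idx 0) = e ∧
      pts (Fin.last k) = x ∧
      (∀ j : Fin (k + 1), pts j ∈ P (idx j)) ∧
      (∀ w : G.Walk e x, w.length = G.dist e x →
        (∀ j : Fin (k + 1), entry (idx j) ∈ w.support ∧ pts j ∈ w.support) ∧
        (∀ j : Fin (k + 1), ∀ v ∈ w.support,
          G.dist e (entry (idx j)) ≤ G.dist e v → G.dist e v ≤ G.dist e (pts j) →
            v ∈ P (idx j))) ∧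
      (∀ j : Fin k, G.dist (pts j.castSucc) (entry (idx j.succ)) ≤ 1) ∧
      G.dist e x = (∑ j : Fin (k + 1), G.dist (entry (idx j)) (pts j)) +
        ∑ j : Fin k, G.dist (pts j.castSucc) (entry (idx j.succ)) := by
  have ⟨_, _, hcover, _, _, _⟩ := htg
  obtain ⟨i, hx⟩ := hcover x
  obtain ⟨D⟩ :=
    htg.nonempty_geodesicDecomposition hconn ⟨hentry_mem, hentry_min, hentry_uniq⟩ hx
  exact ⟨D.k, D.idx, D.pts, D.injective_idx, D.entry_idx_zero, D.pts_last, D.pts_mem,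
    fun w hw => ⟨D.mem_support w hw, D.mem_of_dist w hw⟩, D.dist_le_one, D.dist_eq_sum⟩
end

section
/- Let X be a uniformly discrete δ-hyperbolic graph of bounded geometry with basepoint e, and fix n ≥ 1 and k ≤ n/4. Define F(x,k,n) ∈ ℓ^p(X) as the characteristic function of the set F_{x,k,n} of points lying on some geodesic segment g([n,2n]) for g a geodesic from some y with d(x,y) ≤ k to e, excluding points in B(e;3δ). Then there exists a constant C (depending only on δ and the geometry bound) such that ‖F(x,k,n)‖_p^p ≤ C·n for all x, and if additionally d(x,e) ≥ 2n then ‖F(x,k,n)‖_p^p ≥ n - 3δ. -/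
/-!
Every point of `F_{x,k,n}` lies on a geodesic from some `y` near `x` to `e`. In the thin
triangle `y, e, x` it is `δ`-close to the side `[e, x]` (the side `[y, x]` is too short to be
near a point at distance `≥ n` from `y`), and its distance to `e` pins down the position on
`[e, x]` up to an interval of length `O(n)`. Bounded geometry then bounds `|F_{x,k,n}|` by
`O(n)` balls of fixed radius. For the lower bound, the segment `[n, 2n - 3δ]` of a single
geodesic from `x` to `e` already lies in `F_{x,k,n}`.
-/

/-- A discrete geodesic of length `L` from `a` to `b`, parametrized by arclength. -/
def IsDGeodesic {X : Type*} [MetricSpace X] (γ : ℕ → X) (a b : X) (L : ℕ) : Prop :=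
  (L : ℝ) = dist a b ∧ γ 0 = a ∧ γ L = b ∧
    ∀ s ≤ L, ∀ t ≤ L, dist (γ s) (γ t) = |(s : ℝ) - (t : ℝ)|

/-- The Rips thin-triangles condition with constant `δ` for discrete geodesics. -/
def DRipsHyperbolic (X : Type*) [MetricSpace X] (δ : ℝ) : Prop :=
  ∀ (a b c : X) (γ₁ γ₂ γ₃ : ℕ → X) (L₁ L₂ L₃ : ℕ),
    IsDGeodesic γ₁ a b L₁ → IsDGeodesic γ₂ b c L₂ → IsDGeodesic γ₃ a c L₃ →
      ∀ s ≤ L₁, ∃ u : X, ((∃ t ≤ L₂, γ₂ t = u) ∨ (∃ t ≤ L₃, γ₃ t = u)) ∧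
        dist (γ₁ s) u ≤ δ

/-- The trumpet set `F_{x,k,n}`: points lying on a segment `g([n,2n])` of some geodesic
`g` from a point `y` with `d(x,y) ≤ k` to the basepoint `e`, excluding `B(e; 3δ)`. -/
def trumpetSet {X : Type*} [MetricSpace X] (e : X) (δ : ℝ) (x : X) (k n : ℕ) : Set X :=
  {z : X | 3 * δ ≤ dist e z ∧
    ∃ (y : X) (γ : ℕ → X) (L t : ℕ), dist x y ≤ (k : ℝ) ∧ IsDGeodesic γ y e L ∧
      t ≤ L ∧ n ≤ t ∧ t ≤ 2 * n ∧ γ t = z}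

open Metric

namespace IsDGeodesic

variable {X : Type*} [MetricSpace X] {γ : ℕ → X} {a b : X} {L t : ℕ}

theorem dist_left_apply (h : IsDGeodesic γ a b L) (ht : t ≤ L) : dist a (γ t) = t := by
  have := h.2.2.2 0 (Nat.zero_le L) t ht
  rwa [h.2.1, Nat.cast_zero, zero_sub, abs_neg, Nat.abs_cast] at this

theorem dist_apply_right (h : IsDGeodesic γ a b L) (ht : t ≤ L) : dist (γ t) b = L - t := by
  have := h.2.2.2 t ht L le_rfl
  rwa [h.2.2.1, abs_sub_comm, abs_of_nonneg (sub_nonneg.2 (by exact_mod_cast ht))] at this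

theorem injOn (h : IsDGeodesic γ a b L) : Set.InjOn γ (Set.Iic L) := by
  intro s hs t ht hst
  have := h.2.2.2 s hs t ht
  rw [hst, dist_self, eq_comm, abs_eq_zero, sub_eq_zero] at this
  exact_mod_cast this

end IsDGeodesic

theorem Set.ncard_le_card_mul_of_subset_biUnion {α ι : Type*} {s : Set α} {T : Finset ι}
    {A : ι → Set α} {N : ℕ} (hs : s ⊆ ⋃ i ∈ T, A i)
    (hA : ∀ i ∈ T, (A i).Finite ∧ (A i).ncard ≤ N) : s.ncard ≤ T.card * N :=
  calc s.ncard ≤ (⋃ i ∈ T, A i).ncard :=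
        Set.ncard_le_ncard hs (T.finite_toSet.biUnion fun i hi => (hA i hi).1)
    _ ≤ ∑ i ∈ T, (A i).ncard := T.set_ncard_biUnion_le A
    _ ≤ T.card * N := by
        simpa only [smul_eq_mul] using Finset.sum_le_card_nsmul T _ N fun i hi => (hA i hi).2

theorem Nat.cast_card_Icc_ceil_floor_le {lo hi : ℝ} (h : lo ≤ hi) :
    ((Finset.Icc ⌈lo⌉₊ ⌊hi⌋₊).card : ℝ) ≤ hi - lo + 1 := by
  rw [Nat.card_Icc]
  rcases lt_or_ge hi 0 with hneg | hnonneg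
  · have : ⌊hi⌋₊ + 1 - ⌈lo⌉₊ ≤ 1 := by
      rw [Nat.floor_eq_zero.mpr (hneg.trans one_pos)]; omega
    have : ((⌊hi⌋₊ + 1 - ⌈lo⌉₊ : ℕ) : ℝ) ≤ 1 := by exact_mod_cast this
    linarith
  · rcases le_total ⌈lo⌉₊ (⌊hi⌋₊ + 1) with hle | hle
    · rw [Nat.cast_sub hle]
      push_cast
      linarith [Nat.floor_le hnonneg, Nat.le_ceil lo]
    · rw [Nat.sub_eq_zero_of_le hle, Nat.cast_zero]
      linarith

theorem Nat.cast_sub_le_cast_tsub (a b : ℕ) : (a : ℝ) - b ≤ ((a - b : ℕ) : ℝ) := by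
  rcases le_total b a with h | h
  · rw [Nat.cast_sub h]
  · rw [Nat.sub_eq_zero_of_le h, Nat.cast_zero, sub_nonpos]
    exact_mod_cast h

section trumpetSet

variable {X : Type*} [MetricSpace X] {e x z : X} {δ : ℝ} {k n : ℕ}

theorem trumpetSet_subset_closedBall : trumpetSet e δ x k n ⊆ closedBall x (k + 2 * n) := by
  rintro _ ⟨-, y, γ, L, t, hxy, hγ, htL, -, ht2, rfl⟩
  have ht2' : (t : ℝ) ≤ 2 * n := by exact_mod_cast ht2
  rw [mem_closedBall, dist_comm]
  calc dist x (γ t) ≤ dist x y + dist y (γ t) := dist_triangle _ _ _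
    _ ≤ k + 2 * n := by rw [hγ.dist_left_apply htL]; linarith

theorem dist_mem_Icc_of_mem_trumpetSet (hz : z ∈ trumpetSet e δ x k n) :
    dist e z ∈ Set.Icc (dist x e - k - 2 * n) (dist x e + k - n) := by
  obtain ⟨-, y, γ, L, t, hxy, hγ, htL, hnt, ht2, rfl⟩ := hz
  have hL : |dist y e - dist x e| ≤ dist y x := abs_dist_sub_le y x e
  rw [abs_le, dist_comm y x] at hL
  have hnt' : (n : ℝ) ≤ t := by exact_mod_cast hnt
  have ht2' : (t : ℝ) ≤ 2 * n := by exact_mod_cast ht2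
  rw [dist_comm e (γ t), hγ.dist_apply_right htL, hγ.1]
  constructor <;> linarith

theorem exists_dist_le_of_mem_trumpetSet (hhyp : DRipsHyperbolic X δ)
    (hgeodesic : ∀ a b : X, ∃ (γ : ℕ → X) (L : ℕ), IsDGeodesic γ a b L)
    (hkn : 2 * k + δ < n) {γ₀ : ℕ → X} {L₀ : ℕ} (hγ₀ : IsDGeodesic γ₀ e x L₀)
    (hz : z ∈ trumpetSet e δ x k n) : ∃ s ≤ L₀, dist z (γ₀ s) ≤ δ := by
  obtain ⟨-, y, γ, L, t, hxy, hγ, htL, hnt, -, rfl⟩ := hz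
  obtain ⟨γ₁, L₁, hγ₁⟩ := hgeodesic y x
  obtain ⟨u, ⟨s, hs, rfl⟩ | ⟨s, hs, rfl⟩, hu⟩ :=
    hhyp y e x γ γ₀ γ₁ L L₀ L₁ hγ hγ₀ hγ₁ t htL
  · exact ⟨s, hs, hu⟩
  · -- `γ t` would be within `k + δ` of `x`, yet it is at distance `t ≥ n` from `y`
    exfalso
    have hsx := hγ₁.dist_apply_right hs
    have hyt := dist_triangle y x (γ t)
    have hxt := dist_triangle x (γ₁ s) (γ t)
    have hnt' : (n : ℝ) ≤ t := by exact_mod_cast hnt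
    rw [hγ.dist_left_apply htL] at hyt
    rw [dist_comm] at hxy hu hsx
    rw [hγ₁.1] at hsx
    linarith [(Nat.cast_nonneg s : (0 : ℝ) ≤ s)]

theorem trumpetSet_subset_biUnion_closedBall (hhyp : DRipsHyperbolic X δ)
    (hgeodesic : ∀ a b : X, ∃ (γ : ℕ → X) (L : ℕ), IsDGeodesic γ a b L)
    (hkn : 2 * k + δ < n) {γ₀ : ℕ → X} {L₀ : ℕ} (hγ₀ : IsDGeodesic γ₀ e x L₀) :
    trumpetSet e δ x k n ⊆ ⋃ s ∈ Finset.Icc ⌈dist x e - k - 2 * n - δ⌉₊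
      ⌊dist x e + k - n + δ⌋₊, closedBall (γ₀ s) δ := by
  intro z hz
  obtain ⟨s, hs, hzs⟩ := exists_dist_le_of_mem_trumpetSet hhyp hgeodesic hkn hγ₀ hz
  obtain ⟨hlo, hhi⟩ := dist_mem_Icc_of_mem_trumpetSet hz
  have hes := abs_dist_sub_le (γ₀ s) z e
  rw [dist_comm (γ₀ s) e, dist_comm z e, dist_comm (γ₀ s) z, hγ₀.dist_left_apply hs,
    abs_le] at hes
  simp only [Set.mem_iUnion, Finset.mem_Icc, mem_closedBall, exists_prop]
  exact ⟨s, ⟨Nat.ceil_le.2 (by linarith), Nat.le_floor (by linarith)⟩, hzs⟩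

-- The radius `9δ/2` dominates both `k + 2n` when `n ≤ 2δ` and the covering radius `δ`.
theorem ncard_trumpetSet_le (hδ : 0 ≤ δ) (hhyp : DRipsHyperbolic X δ)
    (hgeodesic : ∀ a b : X, ∃ (γ : ℕ → X) (L : ℕ), IsDGeodesic γ a b L) {N : ℕ}
    (hN : ∀ a : X, (closedBall a (9 * δ / 2)).Finite ∧ (closedBall a (9 * δ / 2)).ncard ≤ N)
    (hn : 1 ≤ n) (hk : (k : ℝ) ≤ n / 4) :
    ((trumpetSet e δ x k n).ncard : ℝ) ≤ 4 * N * n := by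
  have hn' : (1 : ℝ) ≤ n := by exact_mod_cast hn
  rcases le_or_gt (n : ℝ) (2 * δ) with hsmall | hlarge
  · have hsub : trumpetSet e δ x k n ⊆ closedBall x (9 * δ / 2) :=
      trumpetSet_subset_closedBall.trans (closedBall_subset_closedBall (by linarith))
    have hcard : ((trumpetSet e δ x k n).ncard : ℝ) ≤ N := by
      exact_mod_cast (Set.ncard_le_ncard hsub (hN x).1).trans (hN x).2
    nlinarith [(Nat.cast_nonneg N : (0 : ℝ) ≤ N)]
  · obtain ⟨γ₀, L₀, hγ₀⟩ := hgeodesic e x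
    have hcover := (trumpetSet_subset_biUnion_closedBall hhyp hgeodesic
      (by linarith : 2 * (k : ℝ) + δ < n) hγ₀).trans
      (Set.iUnion₂_mono fun s _ => closedBall_subset_closedBall (by linarith : δ ≤ 9 * δ / 2))
    have hcard := Set.ncard_le_card_mul_of_subset_biUnion hcover fun s _ => hN (γ₀ s)
    have hT := Nat.cast_card_Icc_ceil_floor_le
      (by linarith : dist x e - k - 2 * n - δ ≤ dist x e + k - n + δ)
    calc ((trumpetSet e δ x k n).ncard : ℝ)
        ≤ (Finset.Icc ⌈dist x e - k - 2 * n - δ⌉₊ ⌊dist x e + k - n + δ⌋₊).card * N := by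
          exact_mod_cast hcard
      _ ≤ 4 * n * N := by gcongr; linarith
      _ = 4 * N * n := by ring

theorem le_ncard_trumpetSet (hδ : 0 ≤ δ) (hfin : (trumpetSet e δ x k n).Finite)
    {γ : ℕ → X} {L : ℕ} (hγ : IsDGeodesic γ x e L) (hxe : 2 * (n : ℝ) ≤ dist x e) :
    (n : ℝ) - 3 * δ ≤ (trumpetSet e δ x k n).ncard := by
  set m := ⌈3 * δ⌉₊
  have hL : 2 * n ≤ L := by
    have : ((2 * n : ℕ) : ℝ) ≤ L := by push_cast; rw [hγ.1]; exact hxe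
    exact_mod_cast this
  have hmaps : γ '' (Finset.Ico n (2 * n + 1 - m) : Set ℕ) ⊆ trumpetSet e δ x k n := by
    rintro _ ⟨t, ht, rfl⟩
    rw [Finset.coe_Ico, Set.mem_Ico] at ht
    have htL : t ≤ L := by omega
    have htm : ((t + m : ℕ) : ℝ) ≤ L := by exact_mod_cast (by omega : t + m ≤ L)
    push_cast at htm
    refine ⟨?_, x, γ, L, t, (dist_self x).trans_le k.cast_nonneg, hγ, htL, ht.1, by omega, rfl⟩
    rw [dist_comm, hγ.dist_apply_right htL]
    linarith [Nat.le_ceil (3 * δ)]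
  have hinj : Set.InjOn γ (Finset.Ico n (2 * n + 1 - m)) :=
    hγ.injOn.mono fun t ht => by
      rw [Finset.coe_Ico, Set.mem_Ico] at ht
      exact Set.mem_Iic.2 (by omega)
  have hcard : n + 1 - m ≤ (trumpetSet e δ x k n).ncard := by
    have := Set.ncard_le_ncard hmaps hfin
    rwa [hinj.ncard_image, Set.ncard_coe_finset, Nat.card_Ico,
      (by omega : 2 * n + 1 - m - n = n + 1 - m)] at this
  have hm : (m : ℝ) < 3 * δ + 1 := Nat.ceil_lt_add_one (by linarith)
  calc (n : ℝ) - 3 * δ ≤ ((n + 1 : ℕ) : ℝ) - m := by push_cast; linarith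
    _ ≤ ((n + 1 - m : ℕ) : ℝ) := Nat.cast_sub_le_cast_tsub (n + 1) m
    _ ≤ (trumpetSet e δ x k n).ncard := by exact_mod_cast hcard

end trumpetSet

/-- `‖F(x,k,n)‖_p^p` is the cardinality of `F_{x,k,n}` for every `p`. -/
theorem stmt12_general {X : Type*} [MetricSpace X] (δ : ℝ) (hδ : 0 ≤ δ) (e : X)
    (hgeodesic : ∀ a b : X, ∃ (γ : ℕ → X) (L : ℕ), IsDGeodesic γ a b L)
    (hbddgeom : ∀ r : ℝ, ∃ N : ℕ, ∀ a : X,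
      (Metric.closedBall a r).Finite ∧ (Metric.closedBall a r).ncard ≤ N)
    (hhyp : DRipsHyperbolic X δ) :
    ∃ C : ℝ, 0 < C ∧ ∀ (n k : ℕ), 1 ≤ n → (k : ℝ) ≤ (n : ℝ) / 4 → ∀ x : X,
      (trumpetSet e δ x k n).Finite ∧
      ((trumpetSet e δ x k n).ncard : ℝ) ≤ C * n ∧
      (2 * (n : ℝ) ≤ dist x e → (n : ℝ) - 3 * δ ≤ ((trumpetSet e δ x k n).ncard : ℝ)) := by
  obtain ⟨N, hN⟩ := hbddgeom (9 * δ / 2)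
  refine ⟨4 * (N + 1), by positivity, fun n k hn hk x => ?_⟩
  have hfin : (trumpetSet e δ x k n).Finite := by
    obtain ⟨M, hM⟩ := hbddgeom (k + 2 * n)
    exact (hM x).1.subset trumpetSet_subset_closedBall
  refine ⟨hfin, ?_, fun hxe => ?_⟩
  · calc ((trumpetSet e δ x k n).ncard : ℝ) ≤ 4 * N * n :=
          ncard_trumpetSet_le hδ hhyp hgeodesic hN hn hk
      _ ≤ 4 * (N + 1) * n := by gcongr; linarith
  · obtain ⟨γ, L, hγ⟩ := hgeodesic x e
    exact le_ncard_trumpetSet hδ hfin hγ hxe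

/-- Lemma 3.3: in a uniformly discrete δ-hyperbolic graph of bounded geometry, the
characteristic function `F(x,k,n)` of `F_{x,k,n}` satisfies `‖F(x,k,n)‖_p^p ≤ C n`
(the `p`-th power of the `ℓ^p` norm of a characteristic function being the cardinality of
the set), and `‖F(x,k,n)‖_p^p ≥ n - 3δ` whenever `d(x,e) ≥ 2n`. -/
theorem stmt12 {X : Type*} [MetricSpace X] (δ : ℝ) (hδ : 0 ≤ δ) (e : X)
    (hdiscrete : ∀ a b : X, a ≠ b → 1 ≤ dist a b)
    (hgeodesic : ∀ a b : X, ∃ (γ : ℕ → X) (L : ℕ), IsDGeodesic γ a b L)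
    (hbddgeom : ∀ r : ℝ, ∃ N : ℕ, ∀ a : X,
      (Metric.closedBall a r).Finite ∧ (Metric.closedBall a r).ncard ≤ N)
    (hhyp : DRipsHyperbolic X δ) :
    ∃ C : ℝ, 0 < C ∧ ∀ (n k : ℕ), 1 ≤ n → (k : ℝ) ≤ (n : ℝ) / 4 → ∀ x : X,
      (trumpetSet e δ x k n).Finite ∧
      ((trumpetSet e δ x k n).ncard : ℝ) ≤ C * n ∧
      (2 * (n : ℝ) ≤ dist x e → (n : ℝ) - 3 * δ ≤ ((trumpetSet e δ x k n).ncard : ℝ)) :=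
  stmt12_general δ hδ e hgeodesic hbddgeom hhyp
end

section
/- Let f : ℕ → ℝ≥0 be concave (non-decreasing with f(n+m)-f(n) ≤ f(n)-f(n-m) for n ≥ m) with property (C_p) for some p > 1. Then ∑_{n=1}^∞ (f(2^n)/2^n)^p < ∞. -/
/-!
Concavity with `m = n` gives `f (2m) ≤ 2 f m`, so `f (2^(n+1)) / 2^(n+1)` is at most twice
`f (2^n) / 2^(n+1)`. By monotonicity every term of the dyadic block `2^n < i ≤ 2^(n+1)` of the
series (C_p) is at least `2^(-n-1) (f (2^n) / 2^(n+1))^p`, and the block has `2^n` terms, so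
`(f (2^(n+1)) / 2^(n+1))^p ≤ 2^(p+1)` times that block. The blocks partition the series (C_p).
-/

open Finset

theorem Finset.sum_range_sum_Ico {M : Type*} [AddCommMonoid M] (g : ℕ → M) {a : ℕ → ℕ}
    (ha : Monotone a) (N : ℕ) :
    ∑ n ∈ range N, ∑ j ∈ Ico (a n) (a (n + 1)), g j = ∑ j ∈ Ico (a 0) (a N), g j := by
  induction N with
  | zero => simp
  | succ N ih =>
    rw [sum_range_succ, ih, sum_Ico_consecutive _ (ha N.zero_le) (ha N.le_succ)]

theorem Summable.sum_Ico_of_monotone {g : ℕ → ℝ} (hg0 : ∀ j, 0 ≤ g j) (hg : Summable g)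
    {a : ℕ → ℕ} (ha : Monotone a) :
    Summable fun n => ∑ j ∈ Ico (a n) (a (n + 1)), g j := by
  refine summable_of_sum_range_le (fun n => sum_nonneg fun j _ => hg0 j) (c := ∑' j, g j)
    fun N => ?_
  rw [sum_range_sum_Ico g ha]
  exact hg.sum_le_tsum _ fun j _ => hg0 j

theorem apply_two_mul_le_of_concave {f : ℕ → ℝ} (hf0 : 0 ≤ f 0)
    (hconc : ∀ m n : ℕ, m ≤ n → f (n + m) - f n ≤ f n - f (n - m)) (m : ℕ) :
    f (2 * m) ≤ 2 * f m := by
  have h := hconc m m le_rfl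
  rw [Nat.sub_self, ← two_mul] at h
  linarith

theorem rpow_div_two_pow_succ_le_two_mul_sum_Ico {f : ℕ → ℝ} (hf0 : ∀ n, 0 ≤ f n)
    (hmono : Monotone f) {p : ℝ} (hp : 0 ≤ p) (n : ℕ) :
    (f (2 ^ n) / 2 ^ (n + 1)) ^ p ≤
      2 * ∑ j ∈ Ico (2 ^ n : ℕ) (2 ^ (n + 1)),
        1 / ((j : ℝ) + 1) * (f (j + 1) / ((j : ℝ) + 1)) ^ p := by
  have hterm : ∀ j ∈ Ico (2 ^ n : ℕ) (2 ^ (n + 1)),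
      1 / (2 : ℝ) ^ (n + 1) * (f (2 ^ n) / 2 ^ (n + 1)) ^ p ≤
        1 / ((j : ℝ) + 1) * (f (j + 1) / ((j : ℝ) + 1)) ^ p := by
    intro j hj
    obtain ⟨hlo, hhi⟩ := mem_Ico.mp hj
    have hj1 : (j : ℝ) + 1 ≤ 2 ^ (n + 1) := by exact_mod_cast hhi
    have hf : f (2 ^ n) ≤ f (j + 1) := hmono (by omega)
    have := hf0 (2 ^ n)
    have := hf0 (j + 1)
    gcongr
  have hsum := card_nsmul_le_sum _ _ _ hterm
  have hcard : #(Ico (2 ^ n) (2 ^ (n + 1))) = 2 ^ n := by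
    rw [Nat.card_Ico, pow_succ]; omega
  rw [hcard, nsmul_eq_mul] at hsum
  calc (f (2 ^ n) / 2 ^ (n + 1)) ^ p
      = 2 * ((2 ^ n : ℕ) * (1 / (2 : ℝ) ^ (n + 1) * (f (2 ^ n) / 2 ^ (n + 1)) ^ p)) := by
        push_cast; field_simp; ring
    _ ≤ _ := by gcongr

/-- If `f` is concave (non-decreasing, `f(n+m)-f(n) ≤ f(n)-f(n-m)` for `m ≤ n`) and has
property (C_p) for some `p > 1`, then `∑_{n ≥ 1} (f(2^n)/2^n)^p < ∞`. -/
theorem stmt18 (p : ℝ) (hp : 1 < p) (f : ℕ → ℝ) (hf0 : ∀ n, 0 ≤ f n)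
    (hmono : Monotone f)
    (hconc : ∀ m n : ℕ, m ≤ n → f (n + m) - f n ≤ f n - f (n - m))
    (hCp : Summable (fun n : ℕ => (1 / ((n : ℝ) + 1)) * (f (n + 1) / ((n : ℝ) + 1)) ^ p)) :
    Summable (fun n : ℕ => (f (2 ^ (n + 1)) / ((2 : ℝ) ^ (n + 1))) ^ p) := by
  have hp0 : 0 ≤ p := by linarith
  have hblocks := hCp.sum_Ico_of_monotone (fun j => by have := hf0 (j + 1); positivity)
    (a := (2 ^ ·)) (pow_right_mono₀ one_le_two)
  refine .of_nonneg_of_le (fun n => by have := hf0 (2 ^ (n + 1)); positivity) (fun n => ?_)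
    ((hblocks.mul_left 2).mul_left (2 ^ p))
  have hdouble : f (2 ^ (n + 1)) ≤ 2 * f (2 ^ n) := by
    rw [pow_succ']; exact apply_two_mul_le_of_concave (hf0 0) hconc _
  calc (f (2 ^ (n + 1)) / 2 ^ (n + 1)) ^ p
      ≤ (2 * f (2 ^ n) / 2 ^ (n + 1)) ^ p := by have := hf0 (2 ^ (n + 1)); gcongr
    _ = 2 ^ p * (f (2 ^ n) / 2 ^ (n + 1)) ^ p := by
        rw [mul_div_assoc, Real.mul_rpow zero_le_two (div_nonneg (hf0 _) (by positivity))]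
    _ ≤ 2 ^ p * (2 * _) := by
        gcongr; exact rpow_div_two_pow_succ_le_two_mul_sum_Ico hf0 hmono hp0 n
end

section
/- Let p > 1 and let f : ℕ → ℝ≥0 be concave with n ↦ f(n)^p/n non-decreasing for n ≥ 1. Then for every m ≥ 1, ∑_{n=1}^{m} f(n)^p/n ≥ (1/2)^{3+p} · f(m)^p. -/
/-!
Concavity gives `f m ≤ 2 f k` for `k = ⌈m/2⌉`, and on `[k, m]` (at least `k` terms) every summand
`f(n)^p / n` is at least `f(k)^p / k`, so the sum is at least `f(k)^p ≥ (f m / 2)^p`.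
-/

theorem le_two_mul_of_concave {f : ℕ → ℝ} (hf0 : ∀ n, 0 ≤ f n)
    (hconc : ∀ m n : ℕ, m ≤ n → f (n + m) - f n ≤ f n - f (n - m))
    {k m : ℕ} (hkm : k ≤ m) (hmk : m ≤ 2 * k) : f m ≤ 2 * f k := by
  have h := hconc (m - k) k (by omega)
  rw [show k + (m - k) = m by omega] at h
  linarith [hf0 (k - (m - k))]

theorem le_sum_Icc_div_of_monotoneOn {g : ℕ → ℝ} (hg0 : ∀ n, 0 ≤ g n)
    (hg : MonotoneOn (fun n : ℕ => g n / n) (Set.Ici 1))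
    {k m : ℕ} (hk : 1 ≤ k) (hkm : 2 * k ≤ m + 1) :
    g k ≤ ∑ n ∈ Finset.Icc 1 m, g n / n := by
  have hk0 : (0 : ℝ) < k := by exact_mod_cast hk
  calc g k = k * (g k / k) := by field_simp
    _ ≤ (Finset.Icc k m).card * (g k / k) := by
        gcongr
        · exact div_nonneg (hg0 k) hk0.le
        · rw [Nat.card_Icc]; exact_mod_cast (by omega : k ≤ m + 1 - k)
    _ = ∑ _n ∈ Finset.Icc k m, g k / k := by rw [Finset.sum_const, nsmul_eq_mul]
    _ ≤ ∑ n ∈ Finset.Icc k m, g n / n := Finset.sum_le_sum fun n hn =>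
        hg (Set.mem_Ici.2 hk) (Set.mem_Ici.2 (hk.trans (Finset.mem_Icc.1 hn).1))
          (Finset.mem_Icc.1 hn).1
    _ ≤ ∑ n ∈ Finset.Icc 1 m, g n / n :=
        Finset.sum_le_sum_of_subset_of_nonneg (Finset.Icc_subset_Icc hk le_rfl)
          fun n _ _ => div_nonneg (hg0 n) n.cast_nonneg

theorem stmt19_general (p : ℝ) (hp : 1 < p) (f : ℕ → ℝ) (hf0 : ∀ n, 0 ≤ f n)
    (hconc : ∀ m n : ℕ, m ≤ n → f (n + m) - f n ≤ f n - f (n - m))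
    (hincr : ∀ a b : ℕ, 1 ≤ a → a ≤ b → f a ^ p / (a : ℝ) ≤ f b ^ p / (b : ℝ)) :
    ∀ m : ℕ, 1 ≤ m →
      ((1 : ℝ) / 2) ^ (3 + p) * f m ^ p ≤ ∑ n ∈ Finset.Icc 1 m, f n ^ p / (n : ℝ) := by
  intro m hm
  set k := (m + 1) / 2
  have hfm : f m ≤ 2 * f k := le_two_mul_of_concave hf0 hconc (by omega) (by omega)
  calc ((1 : ℝ) / 2) ^ (3 + p) * f m ^ p ≤ (1 / 2) ^ p * f m ^ p :=
        mul_le_mul_of_nonneg_right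
          (Real.rpow_le_rpow_of_exponent_ge (by norm_num) (by norm_num) (by linarith))
          (Real.rpow_nonneg (hf0 m) p)
    _ = (1 / 2 * f m) ^ p := (Real.mul_rpow (by norm_num) (hf0 m)).symm
    _ ≤ f k ^ p := Real.rpow_le_rpow (by linarith [hf0 m]) (by linarith) (by linarith)
    _ ≤ ∑ n ∈ Finset.Icc 1 m, f n ^ p / n :=
        le_sum_Icc_div_of_monotoneOn (fun n => Real.rpow_nonneg (hf0 n) p)
          (fun a ha b _ hab => hincr a b ha hab) (by omega) (by omega)

/-- Core comparison step of Lemma 2.2: if `f` is concave and `n ↦ f(n)^p/n` is non-decreasing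
for `n ≥ 1`, then `∑_{n=1}^m f(n)^p/n ≥ (1/2)^{3+p} f(m)^p` for all `m ≥ 1`. -/
theorem stmt19 (p : ℝ) (hp : 1 < p) (f : ℕ → ℝ) (hf0 : ∀ n, 0 ≤ f n)
    (hmono : Monotone f)
    (hconc : ∀ m n : ℕ, m ≤ n → f (n + m) - f n ≤ f n - f (n - m))
    (hincr : ∀ a b : ℕ, 1 ≤ a → a ≤ b → f a ^ p / (a : ℝ) ≤ f b ^ p / (b : ℝ)) :
    ∀ m : ℕ, 1 ≤ m →
      ((1 : ℝ) / 2) ^ (3 + p) * f m ^ p ≤ ∑ n ∈ Finset.Icc 1 m, f n ^ p / (n : ℝ) :=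
  stmt19_general p hp f hf0 hconc hincr
end
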